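/- arXiv:2204.06106 — 4 statements merged into one kernel-verified Lean document; each statement's English description precedes it below -/
import Mathlib

section
/- Let d ≥ 1, σ > 0, a > 0, and u₁, u₂ ∈ ℝ^d. Then TV_a(N(u₁, σ²I_d), N(u₂, σ²I_d)) = TV_a(N(0, σ²), N(‖u₁ − u₂‖₂, σ²)); that is, the TV_a divergence between two isotropic Gaussians in ℝ^d with common standard deviation σ depends only on σ and the Euclidean distance between the means, and equals the TV_a divergence of the corresponding one-dimensional Gaussians. -/
open MeasureTheory

/-- `TV_a(X, Y) = (1/2) ∫ |f(x) − a·g(x)| dx` for densities `f, g`. -/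
noncomputable def TVa {E : Type*} [MeasureSpace E] (a : ℝ) (f g : E → ℝ) : ℝ :=
  (1 / 2) * ∫ x, |f x - a * g x|

/-- Density of the isotropic Gaussian `N(u, σ²I_d)` on `ℝ^d`. -/
noncomputable def gaussDensity (d : ℕ) (σ : ℝ) (u : EuclideanSpace ℝ (Fin d))
    (x : EuclideanSpace ℝ (Fin d)) : ℝ :=
  (2 * Real.pi * σ ^ 2) ^ (-(d : ℝ) / 2) * Real.exp (-‖x - u‖ ^ 2 / (2 * σ ^ 2))

/-- Density of the one-dimensional Gaussian `N(u, σ²)` on `ℝ`. -/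
noncomputable def gauss1 (σ u : ℝ) (x : ℝ) : ℝ :=
  (2 * Real.pi * σ ^ 2) ^ (-(1 : ℝ) / 2) * Real.exp (-(x - u) ^ 2 / (2 * σ ^ 2))

/-! The density of `N(u, σ²I_d)` at `x` depends only on `‖x - u‖`, so a translation followed by a
reflection, both volume preserving, moves the pair of means to `0` and `‖u₁ - u₂‖ e₀`. There both
densities factor over the coordinates with equal factors off the first one, and Fubini together
with the unit mass of the one-dimensional Gaussian leaves the one-dimensional integral. -/

lemma gauss1_nonneg (σ u x : ℝ) : 0 ≤ gauss1 σ u x := by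
  unfold gauss1; positivity

lemma integral_gauss1 {σ : ℝ} (hσ : σ ≠ 0) (u : ℝ) : ∫ x, gauss1 σ u x = 1 := by
  have hc : 0 < 2 * Real.pi * σ ^ 2 := by positivity
  have hshift : gauss1 σ u = fun x => gauss1 σ 0 (x - u) := funext fun x => by simp [gauss1]
  have hexp : ∀ x : ℝ, -x ^ 2 / (2 * σ ^ 2) = -(2 * σ ^ 2)⁻¹ * x ^ 2 := fun x => by ring
  have hvar : Real.pi / (2 * σ ^ 2)⁻¹ = 2 * Real.pi * σ ^ 2 := by rw [div_inv_eq_mul]; ring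
  rw [hshift, integral_sub_right_eq_self (gauss1 σ 0)]
  simp only [gauss1, sub_zero, hexp]
  rw [integral_const_mul, integral_gaussian, hvar, Real.sqrt_eq_rpow, ← Real.rpow_add hc]
  norm_num

lemma gaussDensity_eq_prod (d : ℕ) (σ : ℝ) (u x : EuclideanSpace ℝ (Fin d)) :
    gaussDensity d σ u x = ∏ i, gauss1 σ (u i) (x i) := by
  have hc : 0 ≤ 2 * Real.pi * σ ^ 2 := by positivity
  simp only [gauss1, gaussDensity]
  rw [Finset.prod_mul_distrib, ← Real.exp_sum, Finset.prod_const, Finset.card_univ,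
    Fintype.card_fin, ← Real.rpow_natCast _ d, ← Real.rpow_mul hc, EuclideanSpace.real_norm_sq_eq]
  simp only [PiLp.sub_apply, neg_div, Finset.sum_neg_distrib, Finset.sum_div]
  congr 2
  ring

lemma gaussDensity_eq_of_norm_sub_eq {d : ℕ} (σ : ℝ) {u v x y : EuclideanSpace ℝ (Fin d)}
    (h : ‖x - u‖ = ‖y - v‖) : gaussDensity d σ u x = gaussDensity d σ v y := by
  rw [gaussDensity, gaussDensity, h]

lemma integral_abs_sub_gaussDensity_eq_of_norm_sub_eq {d : ℕ} (σ a : ℝ)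
    {u₁ u₂ v₁ v₂ : EuclideanSpace ℝ (Fin d)} (h : ‖u₁ - u₂‖ = ‖v₁ - v₂‖) :
    ∫ x, |gaussDensity d σ u₁ x - a * gaussDensity d σ u₂ x|
      = ∫ x, |gaussDensity d σ v₁ x - a * gaussDensity d σ v₂ x| := by
  have hnorm : ‖v₂ - v₁‖ = ‖u₂ - u₁‖ := by rw [norm_sub_rev, ← h, norm_sub_rev]
  set L := Submodule.reflection (ℝ ∙ (v₂ - v₁ - (u₂ - u₁)))ᗮ
  have hL : L (v₂ - v₁) = u₂ - u₁ := Submodule.reflection_sub hnorm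
  calc ∫ x, |gaussDensity d σ u₁ x - a * gaussDensity d σ u₂ x|
      = ∫ y, |gaussDensity d σ u₁ (L y + u₁) - a * gaussDensity d σ u₂ (L y + u₁)| := by
        rw [L.measurePreserving.integral_comp L.toHomeomorph.measurableEmbedding
          (fun x => |gaussDensity d σ u₁ (x + u₁) - a * gaussDensity d σ u₂ (x + u₁)|),
          integral_add_right_eq_self (fun x => |_ - a * gaussDensity d σ u₂ x|)]
    _ = ∫ y, |gaussDensity d σ v₁ (y + v₁) - a * gaussDensity d σ v₂ (y + v₁)| := by
        congr 1 with y
        have hmove : L y + u₁ - u₂ = L (y + v₁ - v₂) := by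
          rw [add_sub_assoc, add_sub_assoc, ← neg_sub u₂, ← neg_sub v₂, ← sub_eq_add_neg,
            ← sub_eq_add_neg, map_sub, hL]
        rw [gaussDensity_eq_of_norm_sub_eq σ (u := u₁) (v := v₁) (y := y + v₁) (by simp),
          gaussDensity_eq_of_norm_sub_eq σ (u := u₂) (v := v₂) (y := y + v₁)
            (by rw [hmove, L.norm_map])]
    _ = ∫ x, |gaussDensity d σ v₁ x - a * gaussDensity d σ v₂ x| :=
        integral_add_right_eq_self (fun x => |_ - a * gaussDensity d σ v₂ x|) v₁

lemma integral_abs_sub_gaussDensity_zero_single (n : ℕ) {σ : ℝ} (hσ : σ ≠ 0) (a r : ℝ) :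
    ∫ x : EuclideanSpace ℝ (Fin (n + 1)),
        |gaussDensity (n + 1) σ 0 x - a * gaussDensity (n + 1) σ (EuclideanSpace.single 0 r) x|
      = ∫ t, |gauss1 σ 0 t - a * gauss1 σ r t| := by
  set F : Fin (n + 1) → ℝ → ℝ :=
    Fin.cons (fun t => |gauss1 σ 0 t - a * gauss1 σ r t|) (fun _ => gauss1 σ 0)
  have hprod : ∀ x : EuclideanSpace ℝ (Fin (n + 1)),
      |gaussDensity (n + 1) σ 0 x - a * gaussDensity (n + 1) σ (EuclideanSpace.single 0 r) x|
        = ∏ i, F i (x i) := by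
    intro x
    simp only [gaussDensity_eq_prod, Fin.prod_univ_succ, F, Fin.cons_zero, Fin.cons_succ,
      PiLp.zero_apply, PiLp.single_apply, if_pos, Fin.succ_ne_zero, if_false]
    rw [← mul_assoc, ← sub_mul, abs_mul,
      abs_of_nonneg (Finset.prod_nonneg fun _ _ => gauss1_nonneg ..)]
  simp only [hprod]
  refine ((PiLp.volume_preserving_ofLp (Fin (n + 1))).integral_comp
    (MeasurableEquiv.toLp 2 _).symm.measurableEmbedding (fun y => ∏ i, F i (y i))).trans ?_
  rw [volume_pi, integral_fintype_prod_eq_prod, Fin.prod_univ_succ]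
  simp [F, integral_gauss1 hσ]

theorem tva_gauss_eq_one_dim_general (d : ℕ) (hd : 1 ≤ d) (σ a : ℝ) (hσ : 0 < σ)
    (u₁ u₂ : EuclideanSpace ℝ (Fin d)) :
    TVa a (gaussDensity d σ u₁) (gaussDensity d σ u₂)
      = TVa a (gauss1 σ 0) (gauss1 σ ‖u₁ - u₂‖) := by
  obtain ⟨n, rfl⟩ := Nat.exists_eq_add_of_le' hd
  rw [TVa, TVa, integral_abs_sub_gaussDensity_eq_of_norm_sub_eq σ a (v₁ := 0)
    (v₂ := EuclideanSpace.single 0 ‖u₁ - u₂‖) (by simp),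
    integral_abs_sub_gaussDensity_zero_single n hσ.ne']

/-- The `TV_a` divergence between two isotropic Gaussians in `ℝ^d` with common standard
deviation `σ` depends only on `σ` and the Euclidean distance between the means, and equals
the `TV_a` divergence of the corresponding one-dimensional Gaussians. -/
theorem tva_gauss_eq_one_dim (d : ℕ) (hd : 1 ≤ d) (σ a : ℝ) (hσ : 0 < σ) (ha : 0 < a)
    (u₁ u₂ : EuclideanSpace ℝ (Fin d)) :
    TVa a (gaussDensity d σ u₁) (gaussDensity d σ u₂)
      = TVa a (gauss1 σ 0) (gauss1 σ ‖u₁ - u₂‖) :=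
  tva_gauss_eq_one_dim_general d hd σ a hσ u₁ u₂
end

section
/- Let q ∈ (0, 1], let a ∈ ℝ, and let X and Y be probability measures on ℝ^n with densities f and g with respect to Lebesgue measure. Let X′ be the mixture (1 − q)·Y + q·X, i.e., the probability measure with density (1 − q)g + qf. Then TV_a(X′, Y) = q · TV_{(a + q − 1)/q}(X, Y). -/
open MeasureTheory

lemma mixture_sub_mul_eq {q : ℝ} (hq : q ≠ 0) (a x y : ℝ) :
    (1 - q) * y + q * x - a * y = q * (x - (a + q - 1) / q * y) := by
  field_simp
  ring

lemma abs_mixture_sub_mul {q : ℝ} (hq : 0 < q) (a x y : ℝ) :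
    |(1 - q) * y + q * x - a * y| = q * |x - (a + q - 1) / q * y| := by
  rw [mixture_sub_mul_eq hq.ne', abs_mul, abs_of_pos hq]

theorem TVa_mixture {E : Type*} [MeasureSpace E] {q : ℝ} (hq : 0 < q) (a : ℝ) (f g : E → ℝ) :
    TVa a (fun x => (1 - q) * g x + q * f x) g = q * TVa ((a + q - 1) / q) f g := by
  simp only [TVa, abs_mixture_sub_mul hq, integral_const_mul]
  ring

theorem tva_mixture_general (n : ℕ) (q a : ℝ) (hq : q ∈ Set.Ioc (0 : ℝ) 1)
    (f g : EuclideanSpace ℝ (Fin n) → ℝ) :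
    TVa a (fun x => (1 - q) * g x + q * f x) g = q * TVa ((a + q - 1) / q) f g :=
  TVa_mixture hq.1 a f g

/-- If `X′` is the mixture `(1 − q)·Y + q·X` (with density `(1 − q)g + qf`), then
`TV_a(X′, Y) = q · TV_{(a + q − 1)/q}(X, Y)`. -/
theorem tva_mixture (n : ℕ) (q a : ℝ) (hq : q ∈ Set.Ioc (0 : ℝ) 1)
    (f g : EuclideanSpace ℝ (Fin n) → ℝ)
    (hf0 : ∀ x, 0 ≤ f x) (hg0 : ∀ x, 0 ≤ g x)
    (hfi : Integrable f) (hgi : Integrable g)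
    (hf1 : ∫ x, f x = 1) (hg1 : ∫ x, g x = 1) :
    TVa a (fun x => (1 - q) * g x + q * f x) g = q * TVa ((a + q - 1) / q) f g :=
  tva_mixture_general n q a hq f g
end

section
/- Let X and Y be probability measures on ℝ^m × ℝ^n with densities f(s, t) = f₁(s)·f₂(s, t) and g(s, t) = g₁(s)·g₂(s, t) with respect to Lebesgue measure, where f₁ and g₁ are the marginal densities on ℝ^m, f₂(s, ·) and g₂(s, ·) are conditional densities (i.e., ∫_{ℝ^n} f₂(s, t) dt = 1 and ∫_{ℝ^n} g₂(s, t) dt = 1 for almost every s), and f₁(s) > 0 for almost every s. Then TV(X, Y) = ∫_{ℝ^m} f₁(s) · TV_{g₁(s)/f₁(s)}( f₂(s, ·), g₂(s, ·) ) ds, i.e., the total variation between the joint distributions equals the average over s ∼ f₁ of the TV_{a(s)} divergence between the conditional distributions, with a(s) = g₁(s)/f₁(s). -/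
open MeasureTheory

/-- `TV(X, Y) = TV_1(X, Y)`. -/
noncomputable def TV {E : Type*} [MeasureSpace E] (f g : E → ℝ) : ℝ :=
  TVa 1 f g

/-! Fubini reduces the joint total variation to the integral over `s` of the total variations
of the sections, and where `f₁ s > 0` the section integrand factors as
`|f₁ f₂ - g₁ g₂| = f₁ |f₂ - (g₁ / f₁) g₂|`. Fubini applies because a product density is integrable:
its sections integrate to `f₁`. -/

theorem integrable_mul_of_integral_eq_one {α β : Type*} [MeasurableSpace α] [MeasurableSpace β]
    {μ : Measure α} {ν : Measure β} [SFinite ν] {f₁ : α → ℝ} {f₂ : α → β → ℝ}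
    (hf₁ : Integrable f₁ μ) (hf₂m : AEStronglyMeasurable (Function.uncurry f₂) (μ.prod ν))
    (hf₂0 : ∀ s t, 0 ≤ f₂ s t) (hf₂1 : ∀ᵐ s ∂μ, ∫ t, f₂ s t ∂ν = 1) :
    Integrable (fun p : α × β => f₁ p.1 * f₂ p.1 p.2) (μ.prod ν) := by
  have hm : AEStronglyMeasurable (fun p : α × β => f₁ p.1 * f₂ p.1 p.2) (μ.prod ν) :=
    hf₁.aestronglyMeasurable.comp_fst.mul hf₂m
  refine (integrable_prod_iff hm).2 ⟨?_, ?_⟩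
  · filter_upwards [hf₂1] with s hs
    exact (Integrable.of_integral_ne_zero (by simp [hs])).const_mul (f₁ s)
  · refine hf₁.norm.congr ?_
    filter_upwards [hf₂1] with s hs
    have hnorm : ∀ t, ‖f₁ s * f₂ s t‖ = ‖f₁ s‖ * f₂ s t := fun t => by
      rw [norm_mul, Real.norm_of_nonneg (hf₂0 s t)]
    simp only [hnorm, integral_const_mul, hs, mul_one]

theorem TVa_prod_eq_integral {α β : Type*} [MeasureSpace α] [MeasureSpace β]
    [SFinite (volume : Measure α)] [SFinite (volume : Measure β)]
    (a : ℝ) {F G : α × β → ℝ} (hF : Integrable F) (hG : Integrable G) :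
    TVa a F G = ∫ s, TVa a (fun t => F (s, t)) (fun t => G (s, t)) := by
  have hdiff : Integrable (fun p => |F p - a * G p|) := (hF.sub (hG.const_mul a)).abs
  rw [TVa, Measure.volume_eq_prod, integral_prod _ hdiff, ← integral_const_mul]
  rfl

theorem mul_TVa_div {E : Type*} [MeasureSpace E] (f g : E → ℝ) {c : ℝ} (hc : 0 < c) (b : ℝ) :
    c * TVa (b / c) f g = TV (fun x => c * f x) (fun x => b * g x) := by
  simp only [TV, TVa, one_mul, ← mul_assoc, mul_comm c (1 / 2 : ℝ)]
  rw [mul_assoc, ← integral_const_mul]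
  congr 2 with x
  rw [← abs_of_pos hc, ← abs_mul, abs_of_pos hc, mul_sub]
  field_simp

theorem tv_chain_rule_general (m n : ℕ)
    (f₁ g₁ : EuclideanSpace ℝ (Fin m) → ℝ)
    (f₂ g₂ : EuclideanSpace ℝ (Fin m) → EuclideanSpace ℝ (Fin n) → ℝ)
    (hf₂m : Measurable (Function.uncurry f₂)) (hg₂m : Measurable (Function.uncurry g₂))
    (hf₂0 : ∀ s t, 0 ≤ f₂ s t) (hg₂0 : ∀ s t, 0 ≤ g₂ s t)
    (hf₁1 : ∫ s, f₁ s = 1) (hg₁1 : ∫ s, g₁ s = 1)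
    (hf₂1 : ∀ᵐ s ∂(volume : Measure (EuclideanSpace ℝ (Fin m))), ∫ t, f₂ s t = 1)
    (hg₂1 : ∀ᵐ s ∂(volume : Measure (EuclideanSpace ℝ (Fin m))), ∫ t, g₂ s t = 1)
    (hf₁pos : ∀ᵐ s ∂(volume : Measure (EuclideanSpace ℝ (Fin m))), 0 < f₁ s) :
    TV (fun p : EuclideanSpace ℝ (Fin m) × EuclideanSpace ℝ (Fin n) => f₁ p.1 * f₂ p.1 p.2)
        (fun p : EuclideanSpace ℝ (Fin m) × EuclideanSpace ℝ (Fin n) => g₁ p.1 * g₂ p.1 p.2)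
      = ∫ s, f₁ s * TVa (g₁ s / f₁ s) (f₂ s) (g₂ s) := by
  have hF := integrable_mul_of_integral_eq_one (.of_integral_ne_zero (hf₁1 ▸ one_ne_zero))
    hf₂m.aestronglyMeasurable hf₂0 hf₂1
  have hG := integrable_mul_of_integral_eq_one (.of_integral_ne_zero (hg₁1 ▸ one_ne_zero))
    hg₂m.aestronglyMeasurable hg₂0 hg₂1
  rw [TV, TVa_prod_eq_integral 1 hF hG]
  refine integral_congr_ae ?_
  filter_upwards [hf₁pos] with s hs
  exact (mul_TVa_div _ _ hs _).symm

/-- Chain-rule decomposition of total variation: for joint densities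
`f(s, t) = f₁(s)·f₂(s, t)` and `g(s, t) = g₁(s)·g₂(s, t)` with `f₁ > 0` a.e., the total
variation of the joints equals the average over `s ∼ f₁` of `TV_{g₁(s)/f₁(s)}` between the
conditionals. -/
theorem tv_chain_rule (m n : ℕ)
    (f₁ g₁ : EuclideanSpace ℝ (Fin m) → ℝ)
    (f₂ g₂ : EuclideanSpace ℝ (Fin m) → EuclideanSpace ℝ (Fin n) → ℝ)
    (hf₁m : Measurable f₁) (hg₁m : Measurable g₁)
    (hf₂m : Measurable (Function.uncurry f₂)) (hg₂m : Measurable (Function.uncurry g₂))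
    (hf₁0 : ∀ s, 0 ≤ f₁ s) (hg₁0 : ∀ s, 0 ≤ g₁ s)
    (hf₂0 : ∀ s t, 0 ≤ f₂ s t) (hg₂0 : ∀ s t, 0 ≤ g₂ s t)
    (hf₁1 : ∫ s, f₁ s = 1) (hg₁1 : ∫ s, g₁ s = 1)
    (hf₂1 : ∀ᵐ s ∂(volume : Measure (EuclideanSpace ℝ (Fin m))), ∫ t, f₂ s t = 1)
    (hg₂1 : ∀ᵐ s ∂(volume : Measure (EuclideanSpace ℝ (Fin m))), ∫ t, g₂ s t = 1)
    (hf₁pos : ∀ᵐ s ∂(volume : Measure (EuclideanSpace ℝ (Fin m))), 0 < f₁ s) :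
    TV (fun p : EuclideanSpace ℝ (Fin m) × EuclideanSpace ℝ (Fin n) => f₁ p.1 * f₂ p.1 p.2)
        (fun p : EuclideanSpace ℝ (Fin m) × EuclideanSpace ℝ (Fin n) => g₁ p.1 * g₂ p.1 p.2)
      = ∫ s, f₁ s * TVa (g₁ s / f₁ s) (f₂ s) (g₂ s) :=
  tv_chain_rule_general m n f₁ g₁ f₂ g₂ hf₂m hg₂m hf₂0 hg₂0 hf₁1 hg₁1 hf₂1 hg₂1 hf₁pos
end

section
/- (Upper bound on membership-inference attack accuracy.) Let ε ≥ 0 and let p, q > 0 be real numbers satisfying |log(p/q)| ≤ ε. Then max( p/(p + q), q/(p + q) ) ≤ σ(ε), where σ(u) = 1/(1 + e^{−u}) is the sigmoid function. In particular, the accuracy of the Bayes-optimal membership classifier, max(ℙ(D | θ), 1 − ℙ(D | θ)) under a uniform prior over the two neighboring datasets, is at most σ(ε). -/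
/-- The sigmoid function `σ(u) = 1/(1 + e^{−u})`. -/
noncomputable def sigmoid (u : ℝ) : ℝ := 1 / (1 + Real.exp (-u))

/-!
The two posterior probabilities are sigmoids of the log-likelihood ratio and of its negative:
`p / (p + q) = σ(log (p / q))` and `q / (p + q) = σ(-log (p / q))`. Both arguments are at most
`|log (p / q)| ≤ ε`, so monotonicity of `σ` bounds both by `σ(ε)`.
-/

lemma sigmoid_eq_real_sigmoid : sigmoid = Real.sigmoid := by
  ext u
  rw [sigmoid, Real.sigmoid_def, one_div]

lemma Real.sigmoid_log_div {p q : ℝ} (hp : 0 < p) (hq : 0 < q) :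
    Real.sigmoid (Real.log (p / q)) = p / (p + q) := by
  rw [Real.sigmoid_def, ← Real.log_inv, inv_div, Real.exp_log (div_pos hq hp)]
  field_simp

lemma Real.sigmoid_neg_log_div {p q : ℝ} (hp : 0 < p) (hq : 0 < q) :
    Real.sigmoid (-Real.log (p / q)) = q / (p + q) := by
  rw [← Real.log_inv, inv_div, Real.sigmoid_log_div hq hp, add_comm]

theorem accuracy_bound_general (ε p q : ℝ) (hp : 0 < p) (hq : 0 < q)
    (h : |Real.log (p / q)| ≤ ε) :
    max (p / (p + q)) (q / (p + q)) ≤ sigmoid ε := by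
  rw [← Real.sigmoid_log_div hp hq, ← Real.sigmoid_neg_log_div hp hq, sigmoid_eq_real_sigmoid]
  exact max_le (Real.sigmoid_le ((le_abs_self _).trans h))
    (Real.sigmoid_le ((neg_le_abs _).trans h))

/-- Upper bound on membership-inference attack accuracy: if `|log(p/q)| ≤ ε` then the
accuracy of the Bayes-optimal classifier, `max(p/(p+q), q/(p+q))`, is at most `σ(ε)`. -/
theorem accuracy_bound (ε p q : ℝ) (hε : 0 ≤ ε) (hp : 0 < p) (hq : 0 < q)
    (h : |Real.log (p / q)| ≤ ε) :
    max (p / (p + q)) (q / (p + q)) ≤ sigmoid ε :=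
  accuracy_bound_general ε p q hp hq h
end
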